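/- arXiv:2102.01533 — 2 statements merged into one kernel-verified Lean document; each statement's English description precedes it below -/
import Mathlib

section
/- (Proposition 3, vanishing of the randomizer at the first optimal time.) Let η_0,…,η_J be randomizers satisfying η_j ≤ Y*_j − Z_j + A*_j almost surely for every j = 0,…,J, and let τ* := inf{ i ≥ 0 : Z_i ≥ E[Y*_{i+1} | F_i] } (with Y*_{J+1} := 0) be the first optimal stopping time. Then η_{τ*} = 0 almost surely. Moreover, if τ* is strict in the sense that Y*_{τ*} − E[Y*_{τ*+1} | F_{τ*}] > 0 almost surely, then almost surely Y*_j − Z_j + A*_j > 0 for every j ≠ τ*, so that j = τ* is the only time at which η_j = 0 is forced. -/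
/-!
On `{τ⋆ = j}` the process stops at once, so `Y⋆ j = Z j` and no increment of `A⋆` has been
collected yet: the upper bound `Y⋆ − Z + A⋆` vanishes there and `η j ≤ 0`. Since `{τ⋆ = j}` is
`ℱ J`-measurable and `E[η j | ℱ J] = 0`, the integral of `η j` over it is zero, which forces
`η j = 0` on it. Under strictness, before `τ⋆` we have `Y⋆ j = E[Y⋆ (j+1) | ℱ j] > Z j`, and after
`τ⋆` the compensator `A⋆ j` contains the positive increment `Y⋆ τ⋆ − E[Y⋆ (τ⋆+1) | ℱ τ⋆]`.
-/

open MeasureTheory Finset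

section ConditionalExpectation

variable {Ω : Type*} {m m₀ : MeasurableSpace Ω} {μ : Measure Ω}

theorem ae_eq_zero_on_of_nonpos_of_condExp_eq_zero (hm : m ≤ m₀) [SigmaFinite (μ.trim hm)]
    {f : Ω → ℝ} (hf : Integrable f μ) (hcond : μ[f | m] =ᵐ[μ] 0) {s : Set Ω}
    (hs : MeasurableSet[m] s) (hle : ∀ᵐ ω ∂μ, ω ∈ s → f ω ≤ 0) :
    ∀ᵐ ω ∂μ, ω ∈ s → f ω = 0 := by
  have hs₀ : MeasurableSet s := hm s hs
  have hint : ∫ ω in s, f ω ∂μ = 0 := by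
    rw [← setIntegral_condExp hm hf hs, setIntegral_congr_ae hs₀ (hcond.mono fun _ h _ => h)]
    simp
  have hneg_nonneg : 0 ≤ᵐ[μ.restrict s] -f := by
    rw [Filter.EventuallyLE, ae_restrict_iff' hs₀]
    filter_upwards [hle] with ω hω hωs
    simpa using hω hωs
  have hneg_zero : -f =ᵐ[μ.restrict s] 0 :=
    (setIntegral_eq_zero_iff_of_nonneg_ae hneg_nonneg hf.integrableOn.neg).1
      (by simp [integral_neg, hint])
  rw [Filter.EventuallyEq, ae_restrict_iff' hs₀] at hneg_zero
  filter_upwards [hneg_zero] with ω hω hωs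
  simpa using hω hωs

end ConditionalExpectation

section FirstHittingTime

variable {Ω : Type*} {m : MeasurableSpace Ω}

theorem eq_iff_of_isFirst {P : ℕ → Prop} {t : ℕ} (ht : P t) (hfirst : ∀ i < t, ¬P i) (j : ℕ) :
    t = j ↔ P j ∧ ∀ i < j, ¬P i := by
  refine ⟨by rintro rfl; exact ⟨ht, hfirst⟩, fun ⟨hj, hbefore⟩ => ?_⟩
  by_contra hne
  rcases lt_or_gt_of_ne hne with hlt | hgt
  · exact hbefore t hlt ht
  · exact hfirst j hgt hj

theorem measurableSet_eq_of_isFirstCrossing {ℱ : Filtration ℕ m} {X C : ℕ → Ω → ℝ} {τ : Ω → ℕ}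
    (hτ : ∀ ω, C (τ ω) ω ≤ X (τ ω) ω ∧ ∀ i < τ ω, X i ω < C i ω) {j : ℕ}
    (hX : ∀ i ≤ j, Measurable[ℱ i] (X i)) (hC : ∀ i ≤ j, Measurable[ℱ i] (C i)) :
    MeasurableSet[ℱ j] {ω | τ ω = j} := by
  have hset : {ω | τ ω = j} = {ω | C j ω ≤ X j ω} ∩ ⋂ i ∈ range j, {ω | X i ω < C i ω} := by
    ext ω
    simp only [Set.mem_ofPred_eq, Set.mem_inter_iff, Set.mem_iInter, mem_range,
      eq_iff_of_isFirst (hτ ω).1 (fun i hi => not_le.2 ((hτ ω).2 i hi)), not_le]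
  rw [hset]
  refine (measurableSet_le (hC j le_rfl) (hX j le_rfl)).inter
    (.biInter (Set.to_countable _) fun i hi => ?_)
  have hij : i ≤ j := (mem_range.1 hi).le
  exact measurableSet_lt ((hX i hij).mono (ℱ.mono hij) le_rfl)
    ((hC i hij).mono (ℱ.mono hij) le_rfl)

end FirstHittingTime

section SnellEnvelope

def compensator (y c : ℕ → ℝ) (j : ℕ) : ℝ := ∑ l ∈ range j, (y l - c l)

variable {J t j : ℕ} {z y c : ℕ → ℝ}

theorem sub_continuation_nonneg (hy : ∀ j < J, y j = max (z j) (c j)) (hj : j < J) :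
    0 ≤ y j - c j := by
  rw [hy j hj]
  exact sub_nonneg.2 (le_max_right _ _)

theorem compensator_nonneg (hy : ∀ j < J, y j = max (z j) (c j)) (hj : j ≤ J) :
    0 ≤ compensator y c j :=
  sum_nonneg fun _ hl => sub_continuation_nonneg hy ((mem_range.1 hl).trans_le hj)

theorem sub_continuation_le_compensator (hy : ∀ j < J, y j = max (z j) (c j)) (hj : j ≤ J)
    (htj : t < j) : y t - c t ≤ compensator y c j :=
  single_le_sum (f := fun l => y l - c l)
    (fun _ hl => sub_continuation_nonneg hy ((mem_range.1 hl).trans_le hj)) (mem_range.2 htj)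

theorem le_snell (hy : ∀ j < J, y j = max (z j) (c j)) (hyJ : y J = z J) (hj : j ≤ J) :
    z j ≤ y j := by
  rcases hj.lt_or_eq with hj | rfl
  · exact hy j hj ▸ le_max_left _ _
  · exact hyJ.ge

theorem snell_eq_continuation (hy : ∀ j < J, y j = max (z j) (c j)) (hj : j < J)
    (hzc : z j < c j) : y j = c j := by
  rw [hy j hj, max_eq_right hzc.le]

theorem compensator_eq_zero (hy : ∀ j < J, y j = max (z j) (c j)) (htJ : t ≤ J)
    (hcont : ∀ i < t, z i < c i) : compensator y c t = 0 :=
  sum_eq_zero fun i hi =>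
    have hit := mem_range.1 hi
    sub_eq_zero.2 (snell_eq_continuation hy (hit.trans_le htJ) (hcont i hit))

theorem snell_sub_add_compensator_eq_zero (hy : ∀ j < J, y j = max (z j) (c j))
    (hyJ : y J = z J) (htJ : t ≤ J) (hstop : t < J → c t ≤ z t) (hcont : ∀ i < t, z i < c i) :
    y t - z t + compensator y c t = 0 := by
  have hyt : y t = z t := by
    rcases htJ.lt_or_eq with htJ | rfl
    · rw [hy t htJ, max_eq_left (hstop htJ)]
    · exact hyJ
  rw [hyt, compensator_eq_zero hy htJ hcont]
  ring

theorem snell_sub_add_compensator_pos_of_lt (hy : ∀ j < J, y j = max (z j) (c j))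
    (htJ : t ≤ J) (hcont : ∀ i < t, z i < c i) (hjt : j < t) :
    0 < y j - z j + compensator y c j := by
  have hjJ := hjt.trans_le htJ
  have hcomp := compensator_nonneg hy hjJ.le
  rw [snell_eq_continuation hy hjJ (hcont j hjt)]
  linarith [hcont j hjt]

theorem snell_sub_add_compensator_pos_of_gt (hy : ∀ j < J, y j = max (z j) (c j))
    (hyJ : y J = z J) (hstrict : 0 < y t - c t) (hj : j ≤ J) (htj : t < j) :
    0 < y j - z j + compensator y c j := by
  linarith [le_snell hy hyJ hj, sub_continuation_le_compensator hy hj htj]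

end SnellEnvelope

theorem randomizer_vanishes_at_first_optimal_time_general
    {Ω : Type*} {mΩ : MeasurableSpace Ω} {μ : Measure Ω} [IsProbabilityMeasure μ]
    (J : ℕ) (ℱ : Filtration ℕ mΩ)
    (Z Y Astar : ℕ → Ω → ℝ)
    (hZ_adapted : Adapted ℱ Z)
    (hYJ : ∀ ω, Y J ω = Z J ω)
    (hY : ∀ j, j < J → ∀ ω, Y j ω = max (Z j ω) ((μ[Y (j + 1) | ℱ j]) ω))
    (hAstar : ∀ j ω, Astar j ω =
      ∑ l ∈ Finset.range j, (Y l ω - (μ[Y (l + 1) | ℱ l]) ω))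
    -- the continuation value `C i = E[Y (i+1) | ℱ i]`, with the convention `Y (J+1) := 0`
    (C : ℕ → Ω → ℝ)
    (hC : ∀ i, i < J → C i = μ[Y (i + 1) | ℱ i])
    (hCJ : ∀ ω, C J ω = 0)
    -- the first optimal stopping time `τ⋆ = inf{ i ≥ 0 : Z i ≥ E[Y (i+1) | ℱ i] }`
    (τs : Ω → ℕ)
    (hτs : ∀ ω, τs ω ≤ J ∧ C (τs ω) ω ≤ Z (τs ω) ω ∧ ∀ i, i < τs ω → Z i ω < C i ω)
    -- the randomizers
    (η : ℕ → Ω → ℝ)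
    (hη_int : ∀ j, Integrable (η j) μ)
    (hη_mean : ∀ j, μ[η j | ℱ J] =ᵐ[μ] 0)
    (hη_le : ∀ j, j ≤ J → ∀ᵐ ω ∂μ, η j ω ≤ Y j ω - Z j ω + Astar j ω) :
    (∀ᵐ ω ∂μ, η (τs ω) ω = 0) ∧
    ((∀ᵐ ω ∂μ, 0 < Y (τs ω) ω - C (τs ω) ω) →
      ∀ᵐ ω ∂μ, ∀ j, j ≤ J → j ≠ τs ω → 0 < Y j ω - Z j ω + Astar j ω) := by
  have hA : ∀ j ω, Astar j ω = compensator (Y · ω) (fun l => μ[Y (l + 1) | ℱ l] ω) j := hAstar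
  have hCc : ∀ ω, ∀ i < J, C i ω = μ[Y (i + 1) | ℱ i] ω := fun ω i hi => congrFun (hC i hi) ω
  have hC_meas : ∀ i ≤ J, Measurable[ℱ i] (C i) := by
    intro i hi
    rcases hi.lt_or_eq with hi | rfl
    · exact hC i hi ▸ stronglyMeasurable_condExp.measurable
    · exact funext hCJ ▸ measurable_const
  have hcont : ∀ ω, ∀ i < τs ω, Z i ω < μ[Y (i + 1) | ℱ i] ω := fun ω i hi =>
    hCc ω i (hi.trans_le (hτs ω).1) ▸ (hτs ω).2.2 i hi
  have hvanish : ∀ j ≤ J, ∀ᵐ ω ∂μ, τs ω = j → η j ω = 0 := by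
    intro j hj
    have hτ_meas : MeasurableSet[ℱ J] {ω | τs ω = j} :=
      ℱ.mono hj _ (measurableSet_eq_of_isFirstCrossing (fun ω => (hτs ω).2)
        (fun i _ => hZ_adapted i) fun i hi => hC_meas i (hi.trans hj))
    refine ae_eq_zero_on_of_nonpos_of_condExp_eq_zero (ℱ.le J) (hη_int j) (hη_mean j) hτ_meas ?_
    filter_upwards [hη_le j hj] with ω hω rfl
    rwa [hA, snell_sub_add_compensator_eq_zero (hY · · ω) (hYJ ω) hj
      (fun htJ => hCc ω _ htJ ▸ (hτs ω).2.1) (hcont ω)] at hω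
  refine ⟨?_, fun hstrict => ?_⟩
  · filter_upwards [ae_all_iff.2 fun j => ae_all_iff.2 (hvanish j)] with ω hω
    exact hω (τs ω) (hτs ω).1 rfl
  · filter_upwards [hstrict] with ω hω j hj hne
    rw [hA]
    rcases lt_or_gt_of_ne hne with hjt | htj
    · exact snell_sub_add_compensator_pos_of_lt (hY · · ω) (hτs ω).1 (hcont ω) hjt
    · exact snell_sub_add_compensator_pos_of_gt (hY · · ω) (hYJ ω)
        (hCc ω _ (htj.trans_le hj) ▸ hω) hj htj

/-- **Proposition 3, vanishing of the randomizer at the first optimal time.** Let `η 0,…,η J`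
be randomizers (integrable random variables with `E[η j | ℱ J] = 0`) satisfying
`η j ≤ Y j − Z j + A⋆ j` almost surely for every `j = 0,…,J`, and let
`τ⋆ = inf{ i ≥ 0 : Z i ≥ E[Y (i+1) | ℱ i] }` (with `Y (J+1) := 0`) be the first optimal
stopping time. Then `η τ⋆ = 0` almost surely. Moreover, if `τ⋆` is strict in the sense that
`Y τ⋆ − E[Y (τ⋆+1) | ℱ τ⋆] > 0` almost surely, then almost surely
`Y j − Z j + A⋆ j > 0` for every `j ≠ τ⋆` with `j ≤ J`, so `j = τ⋆` is the only time at which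
`η j = 0` is forced. -/
theorem randomizer_vanishes_at_first_optimal_time
    {Ω : Type*} {mΩ : MeasurableSpace Ω} {μ : Measure Ω} [IsProbabilityMeasure μ]
    (J : ℕ) (ℱ : Filtration ℕ mΩ)
    (hF0 : ∀ s : Set Ω, MeasurableSet[ℱ 0] s → μ s = 0 ∨ μ s = 1)
    (Z Y Astar : ℕ → Ω → ℝ)
    (hZ_adapted : Adapted ℱ Z)
    (hZ_int : ∀ j, Integrable (Z j) μ)
    (hYJ : ∀ ω, Y J ω = Z J ω)
    (hY : ∀ j, j < J → ∀ ω, Y j ω = max (Z j ω) ((μ[Y (j + 1) | ℱ j]) ω))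
    (hAstar : ∀ j ω, Astar j ω =
      ∑ l ∈ Finset.range j, (Y l ω - (μ[Y (l + 1) | ℱ l]) ω))
    -- the continuation value `C i = E[Y (i+1) | ℱ i]`, with the convention `Y (J+1) := 0`
    (C : ℕ → Ω → ℝ)
    (hC : ∀ i, i < J → C i = μ[Y (i + 1) | ℱ i])
    (hCJ : ∀ ω, C J ω = 0)
    -- the first optimal stopping time `τ⋆ = inf{ i ≥ 0 : Z i ≥ E[Y (i+1) | ℱ i] }`
    (τs : Ω → ℕ)
    (hτs : ∀ ω, τs ω ≤ J ∧ C (τs ω) ω ≤ Z (τs ω) ω ∧ ∀ i, i < τs ω → Z i ω < C i ω)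
    -- the randomizers
    (η : ℕ → Ω → ℝ)
    (hη_int : ∀ j, Integrable (η j) μ)
    (hη_mean : ∀ j, μ[η j | ℱ J] =ᵐ[μ] 0)
    (hη_le : ∀ j, j ≤ J → ∀ᵐ ω ∂μ, η j ω ≤ Y j ω - Z j ω + Astar j ω) :
    (∀ᵐ ω ∂μ, η (τs ω) ω = 0) ∧
    ((∀ᵐ ω ∂μ, 0 < Y (τs ω) ω - C (τs ω) ω) →
      ∀ᵐ ω ∂μ, ∀ j, j ≤ J → j ≠ τs ω → 0 < Y j ω - Z j ω + Astar j ω) :=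
  randomizer_vanishes_at_first_optimal_time_general J ℱ Z Y Astar hZ_adapted hYJ hY hAstar C hC hCJ
    τs hτs η hη_int hη_mean hη_le
end

section
/- (Theorem 3: optimal randomization detects non-Doob optimal martingales.) Let M = M* − S ∈ M^{∘,0} (S a martingale with S_0 = 0), let (ξ_j)_{j=0,…,J} be i.i.d. random variables independent of F_J, taking values in (−∞, 1], with E[ξ_j] = 0 and P̃(ξ_j > 1 − ε) > 0 for every ε ∈ (0,1) (as holds when the ξ_j have a continuous density p supported on (−∞,1] with p(1) > 0), and set η_j := ξ_j (Y*_j − Z_j + A*_j). Then the randomizers η_j satisfy η_j ≤ Y*_j − Z_j + A*_j, and if M ≠ M* with positive probability (i.e. P̃(M_j ≠ M*_j for some j) > 0), then E[ max_{0 ≤ j ≤ J} ( Z_j − M_j + η_j ) ] > Y*_0. -/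
/-!
Write `q j = Y⋆ j - Z j + A⋆ j ≥ 0` for the slack of the Snell envelope. By the Doob
decomposition, `Z j - M j + η j = Y⋆ 0 + S j - (1 - ξ j) * q j`, so it suffices to show that
`X = max_{j ≤ J} (S j - (1 - ξ j) * q j)` has positive mean. At the first time `τ` with
`Y⋆ τ = Z τ` the slack vanishes, hence `X ≥ S τ`, and `E[S τ] = 0` by optional stopping.
If `E[X] = 0`, then `X = S τ` a.s. Since `ξ j` is independent of `ℱ J` and comes arbitrarily close
to `1` with positive probability, the penalty `(1 - ξ j) * q j` can be made arbitrarily small on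
any `ℱ J`-event of positive probability; this forces `S j ≤ S τ` a.s. for all `j ≤ J`. A martingale
started at `0` that is dominated by its stopped value vanishes up to `J`, so `M = M⋆`.
-/

open MeasureTheory ProbabilityTheory Finset

section

variable {Ω : Type*} {mΩ : MeasurableSpace Ω} {μ : Measure Ω} {ℱ : Filtration ℕ mΩ}

theorem MeasureTheory.Integrable.finset_sup' {ι : Type*} {s : Finset ι} (hs : s.Nonempty)
    {f : ι → Ω → ℝ} (hf : ∀ i ∈ s, Integrable (f i) μ) :
    Integrable (fun ω => s.sup' hs fun i => f i ω) μ := by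
  induction hs using Finset.Nonempty.cons_induction with
  | singleton a => simpa using hf a (mem_singleton_self a)
  | cons a s ha hs ih =>
    simp only [sup'_cons hs]
    exact (hf a (mem_cons_self a s)).sup (ih fun i hi => hf i (mem_cons_of_mem hi))

theorem measure_lt_sub_eq_zero_of_indep {m : MeasurableSpace Ω} {ξ U W q : Ω → ℝ}
    (hξ : Indep (MeasurableSpace.comap ξ inferInstance) m μ)
    {ε : ℝ} (hε₀ : 0 < ε) (hε : 0 < μ {ω | 1 - ε < ξ ω})
    (hU : Measurable[m] U) (hW : Measurable[m] W) (hq : Measurable[m] q)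
    (hq_nonneg : ∀ ω, 0 ≤ q ω) (h : ∀ᵐ ω ∂μ, U ω - (1 - ξ ω) * q ω ≤ W ω) :
    μ {ω | ε * (q ω + 1) < U ω - W ω} = 0 := by
  have hE : MeasurableSet[m] {ω | ε * (q ω + 1) < U ω - W ω} :=
    measurableSet_lt (by fun_prop : Measurable[m] fun ω => ε * (q ω + 1)) (hU.sub hW)
  have hB : MeasurableSet[MeasurableSpace.comap ξ inferInstance] {ω | 1 - ε < ξ ω} :=
    ⟨Set.Ioi (1 - ε), measurableSet_Ioi, rfl⟩
  have hBE : {ω | 1 - ε < ξ ω} ∩ {ω | ε * (q ω + 1) < U ω - W ω} ⊆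
      {ω | ¬ U ω - (1 - ξ ω) * q ω ≤ W ω} := by
    rintro ω ⟨hωB, hωE⟩
    simp only [Set.mem_ofPred_eq, not_le] at hωB hωE ⊢
    nlinarith [mul_le_mul_of_nonneg_right (sub_lt_comm.1 hωB).le (hq_nonneg ω)]
  have hprod := (Indep_iff _ _ μ).1 hξ _ _ hB hE
  rw [measure_mono_null hBE h] at hprod
  exact (mul_eq_zero.1 hprod.symm).resolve_left hε.ne'

theorem ae_le_of_ae_sub_mul_le_of_indep {m : MeasurableSpace Ω} {ξ U W q : Ω → ℝ}
    (hξ : Indep (MeasurableSpace.comap ξ inferInstance) m μ)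
    (hξ_tail : ∀ ε : ℝ, 0 < ε → ε < 1 → 0 < μ {ω | 1 - ε < ξ ω})
    (hU : Measurable[m] U) (hW : Measurable[m] W) (hq : Measurable[m] q)
    (hq_nonneg : ∀ ω, 0 ≤ q ω) (h : ∀ᵐ ω ∂μ, U ω - (1 - ξ ω) * q ω ≤ W ω) :
    ∀ᵐ ω ∂μ, U ω ≤ W ω := by
  have hcover : {ω | ¬ U ω ≤ W ω} ⊆ ⋃ n : ℕ, {ω | 1 / (n + 2 : ℝ) * (q ω + 1) < U ω - W ω} := by
    intro ω hω
    simp only [Set.mem_ofPred_eq, not_le] at hω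
    have hq1 : 0 < q ω + 1 := by linarith [hq_nonneg ω]
    obtain ⟨n, hn⟩ := exists_nat_one_div_lt (div_pos (sub_pos.2 hω) hq1)
    refine Set.mem_iUnion.2 ⟨n, ?_⟩
    rw [Set.mem_ofPred_eq, ← lt_div_iff₀ hq1]
    refine lt_of_le_of_lt ?_ hn
    gcongr
    linarith
  refine measure_mono_null hcover (measure_iUnion_null fun n => ?_)
  exact measure_lt_sub_eq_zero_of_indep hξ (by positivity) (hξ_tail _ (by positivity)
    ((div_lt_one (by positivity)).2 (by linarith))) hU hW hq hq_nonneg h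

theorem MeasureTheory.Martingale.integral_stoppedValue_eq [IsFiniteMeasure μ]
    {S : ℕ → Ω → ℝ} (hS : Martingale S ℱ μ) {τ : Ω → WithTop ℕ} (hτ : IsStoppingTime ℱ τ) {N : ℕ}
    (hτN : ∀ ω, τ ω ≤ N) : ∫ ω, stoppedValue S τ ω ∂μ = ∫ ω, S 0 ω ∂μ := by
  have hzero : IsStoppingTime ℱ fun _ => ((0 : ℕ) : WithTop ℕ) := isStoppingTime_const ℱ 0
  have hle : (fun _ => ((0 : ℕ) : WithTop ℕ)) ≤ τ := fun _ => by simp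
  have hS_le := hS.submartingale.expected_stoppedValue_mono hzero hτ hle hτN
  have hnegS_le : ∫ ω, -S 0 ω ∂μ ≤ ∫ ω, -stoppedValue S τ ω ∂μ :=
    hS.neg.submartingale.expected_stoppedValue_mono hzero hτ hle hτN
  rw [integral_neg, integral_neg] at hnegS_le
  exact le_antisymm (neg_le_neg_iff.1 hnegS_le) hS_le

theorem MeasureTheory.Martingale.ae_eq_zero_of_ae_le_stoppedValue [IsFiniteMeasure μ]
    {S : ℕ → Ω → ℝ} (hS : Martingale S ℱ μ) (hS0 : S 0 =ᵐ[μ] 0) {τ : Ω → WithTop ℕ}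
    (hτ : IsStoppingTime ℱ τ) {N : ℕ} (hτN : ∀ ω, τ ω ≤ N)
    (hle : ∀ j ≤ N, S j ≤ᵐ[μ] stoppedValue S τ) : ∀ j ≤ N, S j =ᵐ[μ] 0 := by
  have hmean : ∀ j, ∫ ω, S j ω ∂μ = 0 := fun j => by
    have h := hS.integral_stoppedValue_eq (isStoppingTime_const ℱ j) (N := j) fun _ => le_rfl
    rwa [integral_congr_ae hS0, Pi.zero_def, integral_zero] at h
  have hSτ_int : Integrable (stoppedValue S τ) μ := integrable_stoppedValue ℕ hτ hS.integrable hτN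
  have hSτ_mean : ∫ ω, stoppedValue S τ ω ∂μ = 0 := by
    rw [hS.integral_stoppedValue_eq hτ hτN, hmean]
  have hSτ_zero : stoppedValue S τ =ᵐ[μ] 0 :=
    (integral_eq_zero_iff_of_nonneg_ae (hS0.symm.le.trans (hle 0 N.zero_le)) hSτ_int).1 hSτ_mean
  intro j hj
  refine Filter.EventuallyEq.trans ?_ hSτ_zero
  exact (integral_eq_iff_of_ae_le (hS.integrable j) hSτ_int (hle j hj)).1 (by rw [hmean, hSτ_mean])

theorem indep_comap_apply {ι : Type*} {ξ : ι → Ω → ℝ} {m : MeasurableSpace Ω}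
    (h : Indep (MeasurableSpace.comap (fun ω j => ξ j ω) MeasurableSpace.pi) m μ) (j : ι) :
    Indep (MeasurableSpace.comap (ξ j) inferInstance) m μ :=
  indep_of_indep_of_le_left h
    ((measurable_pi_apply j).comp (comap_measurable fun ω j => ξ j ω)).comap_le

section Randomization

variable {J : ℕ} {S q ξ : ℕ → Ω → ℝ}

theorem integrable_sup'_sub_one_sub_mul (hS : ∀ j, Integrable (S j) μ)
    (hq_meas : ∀ j ≤ J, Measurable[ℱ J] (q j)) (hq_int : ∀ j ≤ J, Integrable (q j) μ)
    (hξ_int : ∀ j, Integrable (ξ j) μ)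
    (hξ_indep : ∀ j, Indep (MeasurableSpace.comap (ξ j) inferInstance) (ℱ J) μ) :
    Integrable (fun ω => (Icc 0 J).sup' (nonempty_Icc.2 J.zero_le)
      fun j => S j ω - (1 - ξ j ω) * q j ω) μ := by
  refine Integrable.finset_sup' _ fun j hj => ?_
  have hjJ := (mem_Icc.1 hj).2
  have hξq : IndepFun (ξ j) (q j) μ :=
    (IndepFun_iff_Indep _ _ μ).2 (indep_of_indep_of_le_right (hξ_indep j) (hq_meas j hjJ).comap_le)
  have hmul : Integrable (fun ω => ξ j ω * q j ω) μ := hξq.integrable_mul (hξ_int j) (hq_int j hjJ)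
  refine (((hS j).sub (hq_int j hjJ)).add hmul).congr (ae_of_all _ fun ω => ?_)
  simp only [Pi.add_apply, Pi.sub_apply]
  ring

theorem MeasureTheory.Martingale.integral_sup'_sub_one_sub_mul_pos [IsFiniteMeasure μ]
    (hS : Martingale S ℱ μ) (hS0 : S 0 =ᵐ[μ] 0) {τ : Ω → WithTop ℕ} (hτ : IsStoppingTime ℱ τ)
    (hτJ : ∀ ω, τ ω ≤ J) (hq_meas : ∀ j ≤ J, Measurable[ℱ J] (q j))
    (hq_int : ∀ j ≤ J, Integrable (q j) μ) (hq_nonneg : ∀ j ≤ J, ∀ ω, 0 ≤ q j ω)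
    (hqτ : ∀ ω, stoppedValue q τ ω = 0) (hξ_int : ∀ j, Integrable (ξ j) μ)
    (hξ_indep : ∀ j, Indep (MeasurableSpace.comap (ξ j) inferInstance) (ℱ J) μ)
    (hξ_tail : ∀ j, ∀ ε : ℝ, 0 < ε → ε < 1 → 0 < μ {ω | 1 - ε < ξ j ω})
    (hS_ne : ¬ ∀ j ≤ J, S j =ᵐ[μ] 0) :
    0 < ∫ ω, (Icc 0 J).sup' (nonempty_Icc.2 J.zero_le)
      (fun j => S j ω - (1 - ξ j ω) * q j ω) ∂μ := by
  set X := fun ω => (Icc 0 J).sup' (nonempty_Icc.2 J.zero_le)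
    (fun j => S j ω - (1 - ξ j ω) * q j ω)
  have hX_int : Integrable X μ :=
    integrable_sup'_sub_one_sub_mul hS.integrable hq_meas hq_int hξ_int hξ_indep
  have hSτ_int : Integrable (stoppedValue S τ) μ := integrable_stoppedValue ℕ hτ hS.integrable hτJ
  have hSτ_mean : ∫ ω, stoppedValue S τ ω ∂μ = 0 := by
    rw [hS.integral_stoppedValue_eq hτ hτJ, integral_congr_ae hS0, Pi.zero_def, integral_zero]
  have hSτ_le : stoppedValue S τ ≤ X := fun ω => by
    have hq0 : q (τ ω).untopA ω = 0 := hqτ ω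
    have := le_sup' (fun j => S j ω - (1 - ξ j ω) * q j ω)
      (mem_Icc.2 ⟨(τ ω).untopA.zero_le, WithTop.untopA_le (hτJ ω)⟩)
    rwa [hq0, mul_zero, sub_zero] at this
  refine (hSτ_mean ▸ integral_mono hSτ_int hX_int hSτ_le).lt_of_ne fun hX_mean => hS_ne ?_
  have hX_eq : X =ᵐ[μ] stoppedValue S τ := ((integral_eq_iff_of_ae_le hSτ_int hX_int
    (ae_of_all _ hSτ_le)).1 (by rw [hSτ_mean, hX_mean])).symm
  refine hS.ae_eq_zero_of_ae_le_stoppedValue hS0 hτ hτJ fun j hj => ?_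
  have hSτ_meas : Measurable[ℱ J] (stoppedValue S τ) :=
    (stronglyMeasurable_stoppedValue_of_le
      hS.stronglyAdapted.isStronglyProgressive_of_discrete hτ hτJ).measurable
  refine ae_le_of_ae_sub_mul_le_of_indep (hξ_indep j) (hξ_tail j)
    ((hS.stronglyAdapted j).measurable.mono (ℱ.mono hj) le_rfl) hSτ_meas (hq_meas j hj)
    (hq_nonneg j hj) ?_
  filter_upwards [hX_eq] with ω hω
  exact hω ▸ le_sup' (fun j => S j ω - (1 - ξ j ω) * q j ω) (mem_Icc.2 ⟨j.zero_le, hj⟩)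

end Randomization

structure IsSnellEnvelope (μ : Measure Ω) (ℱ : Filtration ℕ mΩ) (J : ℕ) (Z Y : ℕ → Ω → ℝ) :
    Prop where
  terminal : ∀ ω, Y J ω = Z J ω
  backward : ∀ j < J, ∀ ω, Y j ω = max (Z j ω) ((μ[Y (j + 1) | ℱ j]) ω)

noncomputable def doobMartingale (μ : Measure Ω) (ℱ : Filtration ℕ mΩ) (Y : ℕ → Ω → ℝ)
    (j : ℕ) (ω : Ω) : ℝ :=
  ∑ l ∈ range j, (Y (l + 1) ω - (μ[Y (l + 1) | ℱ l]) ω)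

noncomputable def doobCompensator (μ : Measure Ω) (ℱ : Filtration ℕ mΩ) (Y : ℕ → Ω → ℝ)
    (j : ℕ) (ω : Ω) : ℝ :=
  ∑ l ∈ range j, (Y l ω - (μ[Y (l + 1) | ℱ l]) ω)

theorem doobMartingale_eq (Y : ℕ → Ω → ℝ) (j : ℕ) (ω : Ω) :
    doobMartingale μ ℱ Y j ω = Y j ω - Y 0 ω + doobCompensator μ ℱ Y j ω := by
  rw [← sub_eq_iff_eq_add, doobMartingale, doobCompensator, ← sum_sub_distrib]
  simp_rw [sub_sub_sub_cancel_right]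
  exact sum_range_sub (Y · ω) j

noncomputable def snellSlack (μ : Measure Ω) (ℱ : Filtration ℕ mΩ) (Z Y : ℕ → Ω → ℝ)
    (j : ℕ) (ω : Ω) : ℝ :=
  Y j ω - Z j ω + doobCompensator μ ℱ Y j ω

/-- `Y` and `Z` are only constrained up to `J`; freezing them at `J` makes the hitting process
adapted, as `Adapted.isStoppingTime_hittingBtwn` requires. -/
noncomputable def snellExerciseTime (J : ℕ) (Z Y : ℕ → Ω → ℝ) : Ω → ℕ :=
  hittingBtwn (fun j ω => Y (min j J) ω - Z (min j J) ω) {0} 0 J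

theorem snellExerciseTime_le (J : ℕ) (Z Y : ℕ → Ω → ℝ) (ω : Ω) :
    snellExerciseTime J Z Y ω ≤ J :=
  hittingBtwn_le ω

namespace IsSnellEnvelope

variable {J : ℕ} {Z Y : ℕ → Ω → ℝ}

theorem le (h : IsSnellEnvelope μ ℱ J Z Y) {j : ℕ} (hj : j ≤ J) (ω : Ω) : Z j ω ≤ Y j ω := by
  rcases hj.lt_or_eq with hj | rfl
  · exact (h.backward j hj ω).symm ▸ le_max_left _ _
  · exact (h.terminal ω).ge

theorem condExp_le (h : IsSnellEnvelope μ ℱ J Z Y) {j : ℕ} (hj : j < J) (ω : Ω) :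
    (μ[Y (j + 1) | ℱ j]) ω ≤ Y j ω :=
  (h.backward j hj ω).symm ▸ le_max_right _ _

theorem measurable (h : IsSnellEnvelope μ ℱ J Z Y) (hZ : Adapted ℱ Z) {j : ℕ} (hj : j ≤ J) :
    Measurable[ℱ j] (Y j) := by
  rcases hj.lt_or_eq with hj | rfl
  · rw [funext (h.backward j hj)]
    exact (hZ j).max stronglyMeasurable_condExp.measurable
  · rw [funext h.terminal]
    exact hZ j

theorem integrable (h : IsSnellEnvelope μ ℱ J Z Y) (hZ : ∀ j, Integrable (Z j) μ) {j : ℕ}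
    (hj : j ≤ J) : Integrable (Y j) μ := by
  rcases hj.lt_or_eq with hj | rfl
  · rw [funext (h.backward j hj)]
    exact (hZ j).sup integrable_condExp
  · rw [funext h.terminal]
    exact hZ j

theorem doobCompensator_nonneg (h : IsSnellEnvelope μ ℱ J Z Y) {j : ℕ} (hj : j ≤ J) (ω : Ω) :
    0 ≤ doobCompensator μ ℱ Y j ω :=
  sum_nonneg fun _ hl => sub_nonneg.2 (h.condExp_le ((mem_range.1 hl).trans_le hj) ω)

theorem measurable_doobCompensator (h : IsSnellEnvelope μ ℱ J Z Y) (hZ : Adapted ℱ Z) {j : ℕ}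
    (hj : j ≤ J) : Measurable[ℱ j] (doobCompensator μ ℱ Y j) := by
  refine Finset.measurable_sum _ fun l hl => ?_
  have hlj : l ≤ j := (mem_range.1 hl).le
  exact ((h.measurable hZ (hlj.trans hj)).mono (ℱ.mono hlj) le_rfl).sub
    (stronglyMeasurable_condExp.measurable.mono (ℱ.mono hlj) le_rfl)

theorem integrable_doobCompensator (h : IsSnellEnvelope μ ℱ J Z Y)
    (hZ : ∀ j, Integrable (Z j) μ) {j : ℕ} (hj : j ≤ J) :
    Integrable (doobCompensator μ ℱ Y j) μ :=
  integrable_finsetSum _ fun _ hl =>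
    (h.integrable hZ ((mem_range.1 hl).le.trans hj)).sub integrable_condExp

theorem doobCompensator_eq_zero (h : IsSnellEnvelope μ ℱ J Z Y) {k : ℕ} (hk : k ≤ J) {ω : Ω}
    (hω : ∀ l < k, Y l ω ≠ Z l ω) : doobCompensator μ ℱ Y k ω = 0 := by
  refine sum_eq_zero fun l hl => ?_
  have hlk := mem_range.1 hl
  have hY := h.backward l (hlk.trans_le hk) ω
  rcases max_choice (Z l ω) ((μ[Y (l + 1) | ℱ l]) ω) with hmax | hmax
  · exact absurd (hY.trans hmax) (hω l hlk)
  · rw [hY, hmax, sub_self]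

theorem snellSlack_nonneg (h : IsSnellEnvelope μ ℱ J Z Y) {j : ℕ} (hj : j ≤ J) (ω : Ω) :
    0 ≤ snellSlack μ ℱ Z Y j ω :=
  add_nonneg (sub_nonneg.2 (h.le hj ω)) (h.doobCompensator_nonneg hj ω)

theorem measurable_snellSlack (h : IsSnellEnvelope μ ℱ J Z Y) (hZ : Adapted ℱ Z) {j : ℕ}
    (hj : j ≤ J) : Measurable[ℱ j] (snellSlack μ ℱ Z Y j) :=
  ((h.measurable hZ hj).sub (hZ j)).add (h.measurable_doobCompensator hZ hj)

theorem integrable_snellSlack (h : IsSnellEnvelope μ ℱ J Z Y) (hZ : ∀ j, Integrable (Z j) μ)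
    {j : ℕ} (hj : j ≤ J) : Integrable (snellSlack μ ℱ Z Y j) μ :=
  ((h.integrable hZ hj).sub (hZ j)).add (h.integrable_doobCompensator hZ hj)

theorem isStoppingTime_snellExerciseTime (h : IsSnellEnvelope μ ℱ J Z Y) (hZ : Adapted ℱ Z) :
    IsStoppingTime ℱ fun ω => (snellExerciseTime J Z Y ω : WithTop ℕ) := by
  refine Adapted.isStoppingTime_hittingBtwn (fun j => ?_) (measurableSet_singleton 0)
  exact ((h.measurable hZ (min_le_right j J)).sub (hZ _)).mono (ℱ.mono (min_le_left j J)) le_rfl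

theorem snellSlack_snellExerciseTime (h : IsSnellEnvelope μ ℱ J Z Y) (ω : Ω) :
    snellSlack μ ℱ Z Y (snellExerciseTime J Z Y ω) ω = 0 := by
  set τ := snellExerciseTime J Z Y ω
  have hτJ : τ ≤ J := snellExerciseTime_le J Z Y ω
  have hstop : Y τ ω = Z τ ω := by
    have : Y (min τ J) ω - Z (min τ J) ω ∈ ({0} : Set ℝ) :=
      hittingBtwn_mem_set (u := fun j ω => Y (min j J) ω - Z (min j J) ω) (s := {0}) (ω := ω)
        ⟨J, ⟨J.zero_le, le_rfl⟩, by simp [h.terminal ω]⟩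
    rwa [min_eq_left hτJ, Set.mem_singleton_iff, sub_eq_zero] at this
  have hcont : ∀ l < τ, Y l ω ≠ Z l ω := fun l hl heq =>
    (hittingBtwn_le_of_mem (u := fun j ω => Y (min j J) ω - Z (min j J) ω) (s := {0})
      l.zero_le (hl.le.trans hτJ) (by simp [min_eq_left (hl.le.trans hτJ), heq])).not_gt hl
  rw [snellSlack, hstop, h.doobCompensator_eq_zero hτJ hcont, sub_self, add_zero]

end IsSnellEnvelope

end

theorem optimal_randomization_detects_non_doob_general
    {Ω : Type*} {mΩ : MeasurableSpace Ω} {μ : Measure Ω} [IsProbabilityMeasure μ]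
    (J : ℕ) (ℱ : Filtration ℕ mΩ)
    (Z Y Mstar Astar : ℕ → Ω → ℝ)
    (hZ_adapted : Adapted ℱ Z)
    (hZ_int : ∀ j, Integrable (Z j) μ)
    (hYJ : ∀ ω, Y J ω = Z J ω)
    (hY : ∀ j, j < J → ∀ ω, Y j ω = max (Z j ω) ((μ[Y (j + 1) | ℱ j]) ω))
    (hMstar : ∀ j ω, Mstar j ω =
      ∑ l ∈ Finset.range j, (Y (l + 1) ω - (μ[Y (l + 1) | ℱ l]) ω))
    (hAstar : ∀ j ω, Astar j ω =
      ∑ l ∈ Finset.range j, (Y l ω - (μ[Y (l + 1) | ℱ l]) ω))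
    -- the martingale shift `S` and the weakly optimal martingale `M = M⋆ − S`
    (S M : ℕ → Ω → ℝ)
    (hS : Martingale S ℱ μ)
    (hS0 : ∀ ω, S 0 ω = 0)
    (hMdef : ∀ j ω, M j ω = Mstar j ω - S j ω)
    -- the i.i.d. randomization variables `ξ j`, independent of `ℱ J`
    (ξ : ℕ → Ω → ℝ)
    (hξ_int : ∀ j, Integrable (ξ j) μ)
    (hξ_F : Indep (MeasurableSpace.comap (fun ω => fun j => ξ j ω)
        (MeasurableSpace.pi : MeasurableSpace (ℕ → ℝ))) (ℱ J) μ)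
    (hξ_le_one : ∀ j ω, ξ j ω ≤ 1)
    (hξ_tail : ∀ j, ∀ ε : ℝ, 0 < ε → ε < 1 → 0 < μ {ω | 1 - ε < ξ j ω})
    -- the optimal randomizers
    (η : ℕ → Ω → ℝ)
    (hη : ∀ j ω, η j ω = ξ j ω * (Y j ω - Z j ω + Astar j ω)) :
    (∀ j, j ≤ J → ∀ᵐ ω ∂μ, η j ω ≤ Y j ω - Z j ω + Astar j ω) ∧
    (0 < μ {ω | ∃ j, j ≤ J ∧ M j ω ≠ Mstar j ω} →
      ∫ ω, Y 0 ω ∂μ <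
        ∫ ω, (Finset.Icc 0 J).sup' (Finset.nonempty_Icc.mpr (Nat.zero_le J))
          (fun j => Z j ω - M j ω + η j ω) ∂μ) := by
  obtain rfl : Mstar = doobMartingale μ ℱ Y := funext fun j => funext (hMstar j)
  obtain rfl : Astar = doobCompensator μ ℱ Y := funext fun j => funext (hAstar j)
  have hsnell : IsSnellEnvelope μ ℱ J Z Y := ⟨hYJ, hY⟩
  refine ⟨fun j hj => ae_of_all _ fun ω => (hη j ω).trans_le
    (mul_le_of_le_one_left (hsnell.snellSlack_nonneg hj ω) (hξ_le_one j ω)), fun hpos => ?_⟩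
  have hintegrand : ∀ ω, (Icc 0 J).sup' (nonempty_Icc.2 J.zero_le)
      (fun j => Z j ω - M j ω + η j ω) = Y 0 ω + (Icc 0 J).sup' (nonempty_Icc.2 J.zero_le)
      (fun j => S j ω - (1 - ξ j ω) * snellSlack μ ℱ Z Y j ω) := fun ω => by
    rw [add_sup']
    refine sup'_congr _ rfl fun j _ => ?_
    rw [hMdef, hη, doobMartingale_eq, snellSlack]
    ring
  have hS_ne : ¬ ∀ j ≤ J, S j =ᵐ[μ] 0 := fun hS_zero => by
    refine hpos.ne' (measure_mono_null ?_
      (ae_iff.1 ((ae_ball_iff (Set.to_countable (Set.Iic J))).2 hS_zero)))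
    rintro ω ⟨j, hj, hne⟩ hall
    exact hne (by rw [hMdef, hall j hj, Pi.zero_apply, sub_zero])
  have hq_meas : ∀ j ≤ J, Measurable[ℱ J] (snellSlack μ ℱ Z Y j) := fun j hj =>
    (hsnell.measurable_snellSlack hZ_adapted hj).mono (ℱ.mono hj) le_rfl
  have hq_int : ∀ j ≤ J, Integrable (snellSlack μ ℱ Z Y j) μ := fun j hj =>
    hsnell.integrable_snellSlack hZ_int hj
  have hpenalty := hS.integral_sup'_sub_one_sub_mul_pos (ae_of_all _ hS0)
    (hsnell.isStoppingTime_snellExerciseTime hZ_adapted)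
    (fun ω => WithTop.coe_le_coe.2 (snellExerciseTime_le J Z Y ω)) hq_meas hq_int
    (fun _ => hsnell.snellSlack_nonneg) hsnell.snellSlack_snellExerciseTime hξ_int
    (indep_comap_apply hξ_F) hξ_tail hS_ne
  rw [integral_congr_ae (ae_of_all _ hintegrand), integral_add (hsnell.integrable hZ_int J.zero_le)
    (integrable_sup'_sub_one_sub_mul hS.integrable hq_meas hq_int hξ_int
      (indep_comap_apply hξ_F))]
  linarith

/-- **Theorem 3: optimal randomization detects non-Doob optimal martingales.** Let
`M = M⋆ − S` (with `S` a martingale, `S 0 = 0`) be weakly optimal at `0`, let `(ξ j)_{j≤J}` be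
i.i.d. random variables independent of `ℱ J`, taking values in `(−∞,1]`, with `E[ξ j] = 0` and
`ℙ(ξ j > 1 − ε) > 0` for every `ε ∈ (0,1)`, and set `η j := ξ j • (Y j − Z j + A⋆ j)`. Then
the randomizers satisfy `η j ≤ Y j − Z j + A⋆ j`, and if `M ≠ M⋆` with positive probability
then `E[ max_{0 ≤ j ≤ J} (Z j − M j + η j) ] > Y⋆ 0` (with `ℱ 0` ℙ-trivial, `Y⋆ 0` is a.s.
constant and equal to its expectation). -/
theorem optimal_randomization_detects_non_doob
    {Ω : Type*} {mΩ : MeasurableSpace Ω} {μ : Measure Ω} [IsProbabilityMeasure μ]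
    (J : ℕ) (ℱ : Filtration ℕ mΩ)
    (hF0 : ∀ s : Set Ω, MeasurableSet[ℱ 0] s → μ s = 0 ∨ μ s = 1)
    (Z Y Mstar Astar : ℕ → Ω → ℝ)
    (hZ_adapted : Adapted ℱ Z)
    (hZ_int : ∀ j, Integrable (Z j) μ)
    (hYJ : ∀ ω, Y J ω = Z J ω)
    (hY : ∀ j, j < J → ∀ ω, Y j ω = max (Z j ω) ((μ[Y (j + 1) | ℱ j]) ω))
    (hMstar : ∀ j ω, Mstar j ω =
      ∑ l ∈ Finset.range j, (Y (l + 1) ω - (μ[Y (l + 1) | ℱ l]) ω))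
    (hAstar : ∀ j ω, Astar j ω =
      ∑ l ∈ Finset.range j, (Y l ω - (μ[Y (l + 1) | ℱ l]) ω))
    -- the martingale shift `S` and the weakly optimal martingale `M = M⋆ − S`
    (S M : ℕ → Ω → ℝ)
    (hS : Martingale S ℱ μ)
    (hS0 : ∀ ω, S 0 ω = 0)
    (hMdef : ∀ j ω, M j ω = Mstar j ω - S j ω)
    (hMopt : Y 0 =ᵐ[μ] μ[fun ω => (Finset.Icc 0 J).sup'
        (Finset.nonempty_Icc.mpr (Nat.zero_le J)) (fun r => Z r ω - M r ω) | ℱ 0])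
    -- the i.i.d. randomization variables `ξ j`, independent of `ℱ J`
    (ξ : ℕ → Ω → ℝ)
    (hξ_meas : ∀ j, Measurable (ξ j))
    (hξ_int : ∀ j, Integrable (ξ j) μ)
    (hξ_indep : iIndepFun ξ μ)
    (hξ_id : ∀ i j : ℕ, IdentDistrib (ξ i) (ξ j) μ μ)
    (hξ_F : Indep (MeasurableSpace.comap (fun ω => fun j => ξ j ω)
        (MeasurableSpace.pi : MeasurableSpace (ℕ → ℝ))) (ℱ J) μ)
    (hξ_le_one : ∀ j ω, ξ j ω ≤ 1)
    (hξ_mean : ∀ j, ∫ ω, ξ j ω ∂μ = 0)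
    (hξ_tail : ∀ j, ∀ ε : ℝ, 0 < ε → ε < 1 → 0 < μ {ω | 1 - ε < ξ j ω})
    -- the optimal randomizers
    (η : ℕ → Ω → ℝ)
    (hη : ∀ j ω, η j ω = ξ j ω * (Y j ω - Z j ω + Astar j ω)) :
    (∀ j, j ≤ J → ∀ᵐ ω ∂μ, η j ω ≤ Y j ω - Z j ω + Astar j ω) ∧
    (0 < μ {ω | ∃ j, j ≤ J ∧ M j ω ≠ Mstar j ω} →
      ∫ ω, Y 0 ω ∂μ <
        ∫ ω, (Finset.Icc 0 J).sup' (Finset.nonempty_Icc.mpr (Nat.zero_le J))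
          (fun j => Z j ω - M j ω + η j ω) ∂μ) :=
  optimal_randomization_detects_non_doob_general J ℱ Z Y Mstar Astar hZ_adapted hZ_int hYJ hY hMstar
    hAstar S M hS hS0 hMdef ξ hξ_int hξ_F hξ_le_one hξ_tail η hη
end
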